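/- (q-problème de parties) For all positive integers a, b: p^a ∑_{ℓ=0}^{b-1} [a+ℓ-1 choose a-1]_q q^ℓ (1−·p)^ℓ + (1−·p)^b ∑_{ℓ=0}^{a-1} [b+ℓ-1 choose b-1]_q p^ℓ = 1. -/

import Mathlib

/-- The `q`-analog `[n]_q = 1 + q + ⋯ + q^(n-1)` of a natural number. -/
def qNum {R : Type*} [CommRing R] (q : R) (n : ℕ) : R := ∑ i ∈ Finset.range n, q ^ i

/-- The `q`-factorial `[n]! = [1][2]⋯[n]`. -/
def qFact {R : Type*} [CommRing R] (q : R) (n : ℕ) : R := ∏ i ∈ Finset.range n, qNum q (i + 1)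

/-- The Gaussian (`q`-)binomial coefficient, via the `q`-Pascal recursion. -/
def qBinom {R : Type*} [CommRing R] (q : R) : ℕ → ℕ → R
  | _, 0 => 1
  | 0, _ + 1 => 0
  | n + 1, k + 1 => qBinom q n k + q ^ (k + 1) * qBinom q n (k + 1)

/-- The `q`-shifted product `(1 −· p)^m = ∏_{i=0}^{m-1} (1 - p q^i)`. -/
def qProdSub {R : Type*} [CommRing R] (q p : R) (m : ℕ) : R :=
  ∏ i ∈ Finset.range m, (1 - p * q ^ i)

/-- The `q`-shifted power `(x +· y)^m = ∏_{i=0}^{m-1} (x + q^i y)`. -/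
def qProdAdd {R : Type*} [CommRing R] (q x y : R) (m : ℕ) : R :=
  ∏ i ∈ Finset.range m, (x + q ^ i * y)

/-! The proof runs by induction on `b`. Passing from `b` to `b + 1` adds the term
`p^a [a+b-1 choose a-1] q^b (1−·p)^b` to the first summand; the second summand loses exactly
that much, because the `q`-Pascal rule telescopes
`(1 - p q^b) ∑_{ℓ<a} [b+ℓ choose b] p^ℓ` into `∑_{ℓ<a} [b+ℓ-1 choose b-1] p^ℓ` minus a boundary
term, which equals the added one by the symmetry `[m+k choose m] = [m+k choose k]`. -/

section QBinom

variable {R : Type*} [CommRing R] (q : R)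

lemma qBinom_zero_right (n : ℕ) : qBinom q n 0 = 1 := by
  cases n <;> rfl

lemma qBinom_succ_succ (n k : ℕ) :
    qBinom q (n + 1) (k + 1) = qBinom q n k + q ^ (k + 1) * qBinom q n (k + 1) :=
  rfl

lemma qBinom_eq_zero_of_lt : ∀ {n k : ℕ}, n < k → qBinom q n k = 0
  | 0, _ + 1, _ => rfl
  | n + 1, k + 1, h => by
    rw [qBinom_succ_succ, qBinom_eq_zero_of_lt (by omega : n < k),
      qBinom_eq_zero_of_lt (by omega : n < k + 1)]
    ring

lemma qBinom_self : ∀ n : ℕ, qBinom q n n = 1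
  | 0 => rfl
  | n + 1 => by
    rw [qBinom_succ_succ, qBinom_self n, qBinom_eq_zero_of_lt q n.lt_succ_self]
    ring

lemma qBinom_one (n : ℕ) : qBinom q n 1 = qNum q n := by
  induction n with
  | zero => rfl
  | succ n ih => rw [qBinom_succ_succ, qBinom_zero_right, ih, qNum, qNum, geom_sum_succ]; ring

/-- The second `q`-Pascal rule, in which the power of `q` falls on the other summand. -/
lemma qBinom_succ_succ' : ∀ m k : ℕ,
    qBinom q (m + k + 1) (k + 1) = q ^ m * qBinom q (m + k) k + qBinom q (m + k) (k + 1)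
  | m, 0 => by
    rw [add_zero, qBinom_one, qBinom_one, qBinom_zero_right, qNum, qNum, Finset.sum_range_succ]
    ring
  | 0, k + 1 => by
    rw [zero_add, qBinom_self, qBinom_self, qBinom_eq_zero_of_lt q (by omega : k + 1 < k + 2)]
    ring
  | m + 1, k + 1 => by
    have hk := qBinom_succ_succ' (m + 1) k
    have hm := qBinom_succ_succ' m (k + 1)
    have hX := qBinom_succ_succ q (m + k + 1) k
    have hY := qBinom_succ_succ q (m + k + 1) (k + 1)
    rw [show m + 1 + k + 1 = m + k + 1 + 1 by omega, show m + 1 + k = m + k + 1 by omega] at hk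
    rw [show m + (k + 1) + 1 = m + k + 1 + 1 by omega, show m + (k + 1) = m + k + 1 by omega] at hm
    rw [show m + 1 + (k + 1) + 1 = m + k + 1 + 1 + 1 by omega,
      show m + 1 + (k + 1) = m + k + 1 + 1 by omega, qBinom_succ_succ _ (m + k + 1 + 1)]
    linear_combination hk - q ^ (m + 1) * hX + q ^ (k + 2) * hm - hY

lemma qBinom_symm : ∀ m k : ℕ, qBinom q (m + k) m = qBinom q (m + k) k
  | 0, k => by rw [zero_add, qBinom_zero_right, qBinom_self]
  | m + 1, 0 => by rw [add_zero, qBinom_zero_right, qBinom_self]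
  | m + 1, k + 1 => by
    have hm := qBinom_symm m (k + 1)
    have hk := qBinom_symm (m + 1) k
    rw [show m + (k + 1) = m + k + 1 by omega] at hm
    rw [show m + 1 + k = m + k + 1 by omega] at hk
    rw [show m + 1 + (k + 1) = m + 1 + k + 1 by omega, qBinom_succ_succ' q (m + 1) k,
      show m + 1 + k + 1 = m + k + 1 + 1 by omega, show m + 1 + k = m + k + 1 by omega,
      qBinom_succ_succ, hm, hk]
    ring

end QBinom

section QProblemOfPoints

variable {R : Type*} [CommRing R] (q p : R)

lemma qProdSub_succ (n : ℕ) : qProdSub q p (n + 1) = qProdSub q p n * (1 - p * q ^ n) :=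
  Finset.prod_range_succ _ n

lemma one_sub_mul_sum_qBinom_mul_pow (k n : ℕ) :
    (1 - p * q ^ (k + 1)) * ∑ ℓ ∈ Finset.range n, qBinom q (k + 1 + ℓ) (k + 1) * p ^ ℓ =
      ∑ ℓ ∈ Finset.range n, qBinom q (k + ℓ) k * p ^ ℓ -
        q ^ (k + 1) * p ^ n * qBinom q (k + n) (k + 1) := by
  induction n with
  | zero => simp [qBinom_eq_zero_of_lt]
  | succ n ih =>
    rw [Finset.sum_range_succ, Finset.sum_range_succ, show k + 1 + n = k + n + 1 by omega,
      show k + (n + 1) = k + n + 1 by omega, qBinom_succ_succ]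
    linear_combination ih

lemma q_problem_of_points (m : ℕ) : ∀ n : ℕ,
    p ^ (m + 1) * ∑ ℓ ∈ Finset.range (n + 1), qBinom q (m + ℓ) m * q ^ ℓ * qProdSub q p ℓ +
      qProdSub q p (n + 1) * ∑ ℓ ∈ Finset.range (m + 1), qBinom q (n + ℓ) n * p ^ ℓ = 1
  | 0 => by
    simp only [Finset.sum_range_one, qProdSub, Finset.prod_range_zero, Finset.prod_range_one,
      zero_add, add_zero, pow_zero, mul_one, one_mul, qBinom_self, qBinom_zero_right]
    linear_combination mul_neg_geom_sum p (m + 1)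
  | n + 1 => by
    have htelescope := one_sub_mul_sum_qBinom_mul_pow q p n (m + 1)
    have hsymm := qBinom_symm q m (n + 1)
    rw [show n + (m + 1) = m + (n + 1) by omega] at htelescope
    rw [Finset.sum_range_succ, qProdSub_succ q p (n + 1)]
    linear_combination q_problem_of_points m n + qProdSub q p (n + 1) * htelescope +
      p ^ (m + 1) * q ^ (n + 1) * qProdSub q p (n + 1) * hsymm

end QProblemOfPoints

/-- q-problème de parties (3.16): for positive integers a, b,
`p^a ∑_{ℓ<b} [a+ℓ-1 choose a-1] q^ℓ (1−·p)^ℓ + (1−·p)^b ∑_{ℓ<a} [b+ℓ-1 choose b-1] p^ℓ = 1`. -/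
theorem q_probleme_de_parties {R : Type*} [CommRing R] (q p : R) (a b : ℕ)
    (ha : 1 ≤ a) (hb : 1 ≤ b) :
    p ^ a * (∑ ℓ ∈ Finset.range b, qBinom q (a + ℓ - 1) (a - 1) * q ^ ℓ * qProdSub q p ℓ) +
      qProdSub q p b * (∑ ℓ ∈ Finset.range a, qBinom q (b + ℓ - 1) (b - 1) * p ^ ℓ) = 1 := by
  obtain ⟨m, rfl⟩ : ∃ m, a = m + 1 := ⟨a - 1, by omega⟩
  obtain ⟨n, rfl⟩ : ∃ n, b = n + 1 := ⟨b - 1, by omega⟩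
  simp only [Nat.add_sub_cancel, Nat.add_right_comm _ 1]
  exact q_problem_of_points q p m n
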